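/- arXiv:2105.11280 — 2 statements merged into one kernel-verified Lean document; each statement's English description precedes it below -/
import Mathlib

section
/- Let G be a Polish group (a separable, completely metrizable topological group). Then G has a dense conjugacy class if and only if G has the joint embedding property, i.e., for any two nonempty open sets U and V in G there exists g ∈ G such that U ∩ gVg⁻¹ ≠ ∅. -/
/-! The set of elements whose conjugacy class meets a fixed nonempty open set `U` is open, and the
joint embedding property says exactly that it is dense. Intersecting over a countable basis gives a
comeagre set of elements with dense conjugacy class, which is nonempty by the Baire category
theorem. -/

open Filter TopologicalSpace

section

variable {G : Type*} [Group G]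

theorem range_conj_eq_conjugatesOf (f : G) :
    Set.range (fun h : G => h * f * h⁻¹) = conjugatesOf f := by
  ext
  simp [conjugatesOf, isConj_iff]

variable (G) [TopologicalSpace G]

def JointEmbeddingProperty : Prop :=
  ∀ U V : Set G, IsOpen U → IsOpen V → U.Nonempty → V.Nonempty →
    ∃ g : G, (U ∩ (fun v => g * v * g⁻¹) '' V).Nonempty

variable {G}

theorem jointEmbeddingProperty_of_dense_conjugatesOf {f : G} (hf : Dense (conjugatesOf f)) :
    JointEmbeddingProperty G := by
  intro U V hU hV hUne hVne
  obtain ⟨x, hxf, hxU⟩ := hf.exists_mem_open hU hUne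
  obtain ⟨y, hyf, hyV⟩ := hf.exists_mem_open hV hVne
  obtain ⟨c, rfl⟩ := isConj_iff.1 hxf
  obtain ⟨d, rfl⟩ := isConj_iff.1 hyf
  exact ⟨c * d⁻¹, c * f * c⁻¹, hxU, d * f * d⁻¹, hyV, by group⟩

theorem isOpen_setOf_inter_conjugatesOf_nonempty [IsTopologicalGroup G] {U : Set G}
    (hU : IsOpen U) : IsOpen {f : G | (U ∩ conjugatesOf f).Nonempty} := by
  have : {f : G | (U ∩ conjugatesOf f).Nonempty} = ⋃ h : G, (fun x => h * x * h⁻¹) ⁻¹' U := by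
    ext f
    simp [Set.Nonempty, conjugatesOf, isConj_iff]
  rw [this]
  exact isOpen_iUnion fun h => hU.preimage (by fun_prop)

theorem JointEmbeddingProperty.dense_setOf_inter_conjugatesOf_nonempty
    (hG : JointEmbeddingProperty G) {U : Set G} (hU : IsOpen U) (hUne : U.Nonempty) :
    Dense {f : G | (U ∩ conjugatesOf f).Nonempty} := by
  refine dense_iff_inter_open.2 fun V hV hVne => ?_
  obtain ⟨g, _, hU, v, hv, rfl⟩ := hG U V hU hV hUne hVne
  exact ⟨v, hv, _, hU, isConj_iff.2 ⟨g, rfl⟩⟩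

theorem JointEmbeddingProperty.eventually_residual_dense_conjugatesOf [IsTopologicalGroup G]
    [SecondCountableTopology G] (hG : JointEmbeddingProperty G) :
    ∀ᶠ f in residual G, Dense (conjugatesOf f) := by
  have hmeets : ∀ᶠ f in residual G, ∀ U ∈ countableBasis G, (U ∩ conjugatesOf f).Nonempty :=
    (eventually_countable_ball (countable_countableBasis G)).2 fun U hU =>
      have hUo := isOpen_of_mem_countableBasis hU
      residual_of_dense_open (isOpen_setOf_inter_conjugatesOf_nonempty hUo)
        (hG.dense_setOf_inter_conjugatesOf_nonempty hUo (nonempty_of_mem_countableBasis hU))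
  exact hmeets.mono fun f hf => (isBasis_countableBasis G).dense_iff.2 fun U hU _ => hf U hU

theorem JointEmbeddingProperty.exists_dense_conjugatesOf [IsTopologicalGroup G]
    [SecondCountableTopology G] [BaireSpace G] (hG : JointEmbeddingProperty G) :
    ∃ f : G, Dense (conjugatesOf f) :=
  (dense_of_mem_residual hG.eventually_residual_dense_conjugatesOf).nonempty

end

/-- A Polish group has a dense conjugacy class iff it has the joint embedding property. -/
theorem polish_group_dense_conjugacy_iff_jep
    {G : Type*} [TopologicalSpace G] [Group G] [IsTopologicalGroup G] [PolishSpace G] :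
    (∃ f : G, Dense (Set.range fun h : G => h * f * h⁻¹)) ↔
      (∀ U V : Set G, IsOpen U → IsOpen V → U.Nonempty → V.Nonempty →
        ∃ g : G, (U ∩ (fun v => g * v * g⁻¹) '' V).Nonempty) := by
  simp_rw [range_conj_eq_conjugatesOf]
  exact ⟨fun ⟨_, hf⟩ => jointEmbeddingProperty_of_dense_conjugatesOf hf,
    JointEmbeddingProperty.exists_dense_conjugatesOf⟩
end

section
/- Let G be a Polish group with the joint embedding property. Then the set D of elements of G whose conjugacy class is dense in G is itself a dense (indeed, comeager) subset of G. -/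
/-!
For each basic open set `U`, the elements having some conjugate in `U` form an open set, and the
joint embedding property says exactly that this open set meets every nonempty open `V`. An element
has dense conjugacy class iff it lies in all of these countably many dense open sets, so these
elements form a comeager set, which is dense by the Baire category theorem.
-/

open Set TopologicalSpace

theorem setOf_dense_range_mem_residual {X Y ι : Type*} [TopologicalSpace X] [TopologicalSpace Y]
    [SecondCountableTopology Y] (φ : ι → X → Y) (hφ : ∀ i, Continuous (φ i))
    (hdense : ∀ U : Set Y, IsOpen U → U.Nonempty → Dense (⋃ i, φ i ⁻¹' U)) :
    {x | Dense (range fun i => φ i x)} ∈ residual X := by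
  have hb := isBasis_countableBasis Y
  have hinter : ⋂ U ∈ {U ∈ countableBasis Y | U.Nonempty}, ⋃ i, φ i ⁻¹' U ∈ residual X := by
    refine (countable_bInter_mem ((countable_countableBasis Y).mono (sep_subset _ _))).2 ?_
    rintro U ⟨hU, hUne⟩
    exact residual_of_dense_open (isOpen_iUnion fun i => (hb.isOpen hU).preimage (hφ i))
      (hdense U (hb.isOpen hU) hUne)
  refine Filter.mem_of_superset hinter fun x hx => hb.dense_iff.2 fun U hU hUne => ?_
  obtain ⟨i, hi⟩ := mem_iUnion.1 (mem_iInter₂.1 hx U ⟨hU, hUne⟩)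
  exact ⟨φ i x, hi, i, rfl⟩

theorem dense_iUnion_preimage_conj_of_jep {G : Type*} [TopologicalSpace G] [Group G]
    (hJEP : ∀ U V : Set G, IsOpen U → IsOpen V → U.Nonempty → V.Nonempty →
      ∃ g : G, (U ∩ (fun v => g * v * g⁻¹) '' V).Nonempty)
    {U : Set G} (hU : IsOpen U) (hUne : U.Nonempty) :
    Dense (⋃ h : G, (fun f => h * f * h⁻¹) ⁻¹' U) := by
  refine dense_iff_inter_open.2 fun V hV hVne => ?_
  obtain ⟨g, -, hxU, v, hvV, rfl⟩ := hJEP U V hU hV hUne hVne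
  exact ⟨v, hvV, mem_iUnion.2 ⟨g, hxU⟩⟩

/-- In a Polish group with the joint embedding property, the set of elements whose
conjugacy class is dense is dense (indeed comeager). -/
theorem dense_class_elements_dense_of_jep
    {G : Type*} [TopologicalSpace G] [Group G] [IsTopologicalGroup G] [PolishSpace G]
    (hJEP : ∀ U V : Set G, IsOpen U → IsOpen V → U.Nonempty → V.Nonempty →
      ∃ g : G, (U ∩ (fun v => g * v * g⁻¹) '' V).Nonempty) :
    Dense {f : G | Dense (Set.range fun h : G => h * f * h⁻¹)} ∧
      {f : G | Dense (Set.range fun h : G => h * f * h⁻¹)} ∈ residual G := by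
  have hres : {f : G | Dense (Set.range fun h : G => h * f * h⁻¹)} ∈ residual G :=
    setOf_dense_range_mem_residual (fun h f => h * f * h⁻¹) (fun h => by fun_prop)
      fun _ hU hUne => dense_iUnion_preimage_conj_of_jep hJEP hU hUne
  exact ⟨dense_of_mem_residual hres, hres⟩
end
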